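/- arXiv:1809.00937 — 5 statements merged into one kernel-verified Lean document; each statement's English description precedes it below -/
import Mathlib

section
/- Let p ≥ q > 0 and let Ψ belong to the class Γ_{p,q}. Then for every s > 0 one has min{s^p, s^q} ≤ γ⁻_Ψ(s) ≤ γ⁺_Ψ(s) ≤ max{s^p, s^q}, and moreover (q/p)·γ⁻_Ψ(s)/s ≤ γ⁻_{Ψ'}(s) ≤ γ⁺_{Ψ'}(s) ≤ (p/q)·γ⁺_Ψ(s)/s. -/
open MeasureTheory Set Filter

noncomputable section

/-- Hypothesis (H₀) on the kernel `J`. -/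
def kernelH0 (N : ℕ) (J : EuclideanSpace ℝ (Fin N) → ℝ) (q₀ : ℝ) : Prop :=
  Measurable J ∧ (∀ z : EuclideanSpace ℝ (Fin N), z ≠ 0 → 0 < J z) ∧
    (∀ z : EuclideanSpace ℝ (Fin N), J (-z) = J z) ∧
    (∫⁻ z in {z : EuclideanSpace ℝ (Fin N) | ‖z‖ < 1}, ENNReal.ofReal (J z)) = ⊤ ∧
    0 < q₀ ∧
    (∫⁻ z : EuclideanSpace ℝ (Fin N), ENNReal.ofReal (min 1 (‖z‖ ^ q₀) * J z)) < ⊤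

/-- The class `Γ_{p,q}` of Young functions. -/
def memGamma (Ψ : ℝ → ℝ) (p q : ℝ) : Prop :=
  ConvexOn ℝ Set.univ Ψ ∧ (∀ s, Ψ (-s) = Ψ s) ∧ ContDiff ℝ 1 Ψ ∧
    (∀ s, 0 ≤ Ψ s) ∧ Ψ 0 = 0 ∧ Ψ 1 = 1 ∧
    (∀ s : ℝ, s ≠ 0 → q ≤ s * deriv Ψ s / Ψ s ∧ s * deriv Ψ s / Ψ s ≤ p)

/-- `F(u) = ∫ Ψ(u)`. -/
def funcF (N : ℕ) (Ψ : ℝ → ℝ) (u : EuclideanSpace ℝ (Fin N) → ℝ) : ENNReal :=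
  ∫⁻ x, ENNReal.ofReal (Ψ (u x))

/-- `F(|∇u|) = ∫ Ψ(|∇u|)`. -/
def funcFgrad (N : ℕ) (Ψ : ℝ → ℝ) (u : EuclideanSpace ℝ (Fin N) → ℝ) : ENNReal :=
  ∫⁻ x, ENNReal.ofReal (Ψ ‖fderiv ℝ u x‖)

/-- `E(u) = (1/2) ∬ Ψ(u(x)-u(y)) J(x-y)`. -/
def funcE (N : ℕ) (Ψ : ℝ → ℝ) (J u : EuclideanSpace ℝ (Fin N) → ℝ) : ENNReal :=
  (1 / 2) * ∫⁻ x, ∫⁻ y, ENNReal.ofReal (Ψ (u x - u y) * J (x - y))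

/-- Interaction energy `ℰ(u;φ)` (real-valued). -/
def interE (N : ℕ) (ψ : ℝ → ℝ) (J u φ : EuclideanSpace ℝ (Fin N) → ℝ) : ℝ :=
  (1 / 2) * ∫ x, ∫ y, ψ (u x - u y) * (φ x - φ y) * J (x - y)

/-- Interaction energy `ℰ(u;φ)` (extended-nonnegative-valued version, for integrands
of constant sign). -/
def interEplus (N : ℕ) (ψ : ℝ → ℝ) (J u φ : EuclideanSpace ℝ (Fin N) → ℝ) : ENNReal :=
  (1 / 2) * ∫⁻ x, ∫⁻ y, ENNReal.ofReal (ψ (u x - u y) * (φ x - φ y) * J (x - y))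

/-- The space `W₀^{J,Ψ}(Ω)`. -/
def memW0 (N : ℕ) (Ψ : ℝ → ℝ) (J : EuclideanSpace ℝ (Fin N) → ℝ)
    (Ω : Set (EuclideanSpace ℝ (Fin N))) (u : EuclideanSpace ℝ (Fin N) → ℝ) : Prop :=
  Measurable u ∧ funcF N Ψ u < ⊤ ∧ funcE N Ψ J u < ⊤ ∧ ∀ᵐ x ∂volume, x ∉ Ω → u x = 0

/-- `γ⁻_g(s) = inf_{x>0} g(sx)/g(x)`. -/
def gammaLow (g : ℝ → ℝ) (s : ℝ) : ℝ := sInf {r : ℝ | ∃ x : ℝ, 0 < x ∧ r = g (s * x) / g x}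

/-- `γ⁺_g(s) = sup_{x>0} g(sx)/g(x)`. -/
def gammaHigh (g : ℝ → ℝ) (s : ℝ) : ℝ := sSup {r : ℝ | ∃ x : ℝ, 0 < x ∧ r = g (s * x) / g x}

/-!
Write `Ψ'` for `deriv Ψ`. On `(0, ∞)` the condition `q Ψ ≤ t Ψ' ≤ p Ψ` says exactly that
`t ↦ Ψ t * t ^ (-q)` is nondecreasing and `t ↦ Ψ t * t ^ (-p)` is nonincreasing. Comparing
these at `x` and `s x` traps `Ψ (s x) / Ψ x` between `s ^ p` and `s ^ q`. Dividing
`q Ψ t / t ≤ Ψ' t ≤ p Ψ t / t` at `t = s x` by the same bounds at `t = x` bounds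
`Ψ' (s x) / Ψ' x` by `q / p` and `p / q` times `Ψ (s x) / (s Ψ x)`. Taking inf and sup over
`x > 0` gives the claim.
-/

section RpowMonotone

variable {f : ℝ → ℝ} {c : ℝ}

theorem hasDerivAt_mul_rpow_neg {f' t : ℝ} (hf : HasDerivAt f f' t) (ht : 0 < t) :
    HasDerivAt (fun u => f u * u ^ (-c)) (t ^ (-c - 1) * (t * f' - c * f t)) t := by
  refine (hf.mul (Real.hasDerivAt_rpow_const (p := -c) (Or.inl ht.ne'))).congr_deriv ?_
  rw [Real.rpow_sub_one ht.ne']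
  field_simp
  ring

theorem monotoneOn_mul_rpow_neg (hf : ∀ t, 0 < t → DifferentiableAt ℝ f t)
    (h : ∀ t, 0 < t → c * f t ≤ t * deriv f t) :
    MonotoneOn (fun t => f t * t ^ (-c)) (Ioi 0) := by
  have hderiv t (ht : t ∈ Ioi (0 : ℝ)) := hasDerivAt_mul_rpow_neg (c := c) (hf t ht).hasDerivAt ht
  refine monotoneOn_of_hasDerivWithinAt_nonneg (convex_Ioi 0)
    (f' := fun t => t ^ (-c - 1) * (t * deriv f t - c * f t))
    (fun t ht => (hderiv t ht).continuousAt.continuousWithinAt) ?_ ?_ <;> rw [interior_Ioi]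
  · exact fun t ht => (hderiv t ht).hasDerivWithinAt
  · exact fun t ht => mul_nonneg (Real.rpow_nonneg (le_of_lt ht) _) (sub_nonneg.2 (h t ht))

theorem antitoneOn_mul_rpow_neg (hf : ∀ t, 0 < t → DifferentiableAt ℝ f t)
    (h : ∀ t, 0 < t → t * deriv f t ≤ c * f t) :
    AntitoneOn (fun t => f t * t ^ (-c)) (Ioi 0) := by
  have hderiv t (ht : t ∈ Ioi (0 : ℝ)) := hasDerivAt_mul_rpow_neg (c := c) (hf t ht).hasDerivAt ht
  refine antitoneOn_of_hasDerivWithinAt_nonpos (convex_Ioi 0)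
    (f' := fun t => t ^ (-c - 1) * (t * deriv f t - c * f t))
    (fun t ht => (hderiv t ht).continuousAt.continuousWithinAt) ?_ ?_ <;> rw [interior_Ioi]
  · exact fun t ht => (hderiv t ht).hasDerivWithinAt
  · exact fun t ht =>
      mul_nonpos_of_nonneg_of_nonpos (Real.rpow_nonneg (le_of_lt ht) _) (sub_nonpos.2 (h t ht))

theorem mul_rpow_neg_le_iff {x y : ℝ} (hx : 0 < x) (hy : 0 < y) :
    f x * x ^ (-c) ≤ f y * y ^ (-c) ↔ f x * y ^ c ≤ f y * x ^ c := by
  have hxc := Real.rpow_pos_of_pos hx c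
  have hyc := Real.rpow_pos_of_pos hy c
  rw [Real.rpow_neg hx.le, Real.rpow_neg hy.le, ← div_eq_mul_inv, ← div_eq_mul_inv,
    div_le_div_iff₀ hxc hyc]

end RpowMonotone

section Gamma

variable {g : ℝ → ℝ} {s a b : ℝ}

theorem gammaLow_le_ratio (h : ∀ x, 0 < x → a ≤ g (s * x) / g x) {x : ℝ} (hx : 0 < x) :
    gammaLow g s ≤ g (s * x) / g x :=
  csInf_le ⟨a, by rintro _ ⟨y, hy, rfl⟩; exact h y hy⟩ ⟨x, hx, rfl⟩

theorem ratio_le_gammaHigh (h : ∀ x, 0 < x → g (s * x) / g x ≤ b) {x : ℝ} (hx : 0 < x) :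
    g (s * x) / g x ≤ gammaHigh g s :=
  le_csSup ⟨b, by rintro _ ⟨y, hy, rfl⟩; exact h y hy⟩ ⟨x, hx, rfl⟩

theorem le_gammaLow_le_gammaHigh_le (h : ∀ x, 0 < x → a ≤ g (s * x) / g x ∧ g (s * x) / g x ≤ b) :
    a ≤ gammaLow g s ∧ gammaLow g s ≤ gammaHigh g s ∧ gammaHigh g s ≤ b := by
  have hne : {r | ∃ x : ℝ, 0 < x ∧ r = g (s * x) / g x}.Nonempty := ⟨_, 1, one_pos, rfl⟩
  refine ⟨le_csInf hne ?_, ?_, csSup_le hne ?_⟩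
  · rintro _ ⟨x, hx, rfl⟩
    exact (h x hx).1
  · exact (gammaLow_le_ratio (fun x hx => (h x hx).1) one_pos).trans
      (ratio_le_gammaHigh (fun x hx => (h x hx).2) one_pos)
  · rintro _ ⟨x, hx, rfl⟩
    exact (h x hx).2

end Gamma

namespace memGamma

variable {Ψ : ℝ → ℝ} {p q : ℝ}

theorem pos (hΨ : memGamma Ψ p q) (hq : 0 < q) {x : ℝ} (hx : x ≠ 0) : 0 < Ψ x := by
  refine (hΨ.2.2.2.1 x).lt_of_ne fun h => ?_
  have := (hΨ.2.2.2.2.2.2 x hx).1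
  rw [← h, div_zero] at this
  linarith

theorem mul_le_mul_deriv (hΨ : memGamma Ψ p q) (hq : 0 < q) {t : ℝ} (ht : t ≠ 0) :
    q * Ψ t ≤ t * deriv Ψ t ∧ t * deriv Ψ t ≤ p * Ψ t := by
  have hΨt := hΨ.pos hq ht
  obtain ⟨hlo, hhi⟩ := hΨ.2.2.2.2.2.2 t ht
  exact ⟨(le_div_iff₀ hΨt).1 hlo, (div_le_iff₀ hΨt).1 hhi⟩

theorem div_le_deriv (hΨ : memGamma Ψ p q) (hq : 0 < q) {t : ℝ} (ht : 0 < t) :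
    q * Ψ t / t ≤ deriv Ψ t ∧ deriv Ψ t ≤ p * Ψ t / t := by
  obtain ⟨hlo, hhi⟩ := hΨ.mul_le_mul_deriv hq ht.ne'
  exact ⟨(div_le_iff₀' ht).2 hlo, (le_div_iff₀' ht).2 hhi⟩

theorem mul_rpow_le (hΨ : memGamma Ψ p q) (hq : 0 < q) {x y : ℝ} (hx : 0 < x) (hxy : x ≤ y) :
    Ψ x * y ^ q ≤ Ψ y * x ^ q ∧ Ψ y * x ^ p ≤ Ψ x * y ^ p := by
  have hy := hx.trans_le hxy
  have hdiff t (_ : 0 < t) : DifferentiableAt ℝ Ψ t := hΨ.2.2.1.differentiable one_ne_zero t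
  have hmono := monotoneOn_mul_rpow_neg hdiff fun t ht => (hΨ.mul_le_mul_deriv hq ht.ne').1
  have hanti := antitoneOn_mul_rpow_neg hdiff fun t ht => (hΨ.mul_le_mul_deriv hq ht.ne').2
  exact ⟨(mul_rpow_neg_le_iff hx hy).1 (hmono hx hy hxy),
    (mul_rpow_neg_le_iff hy hx).1 (hanti hx hy hxy)⟩

theorem ratio_mem (hΨ : memGamma Ψ p q) (hq : 0 < q) {s x : ℝ} (hs : 0 < s) (hx : 0 < x) :
    min (s ^ p) (s ^ q) ≤ Ψ (s * x) / Ψ x ∧ Ψ (s * x) / Ψ x ≤ max (s ^ p) (s ^ q) := by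
  have hΨx := hΨ.pos hq hx.ne'
  rw [le_div_iff₀ hΨx, div_le_iff₀ hΨx]
  have hxp := Real.rpow_pos_of_pos hx p
  have hxq := Real.rpow_pos_of_pos hx q
  rcases le_total 1 s with hs1 | hs1
  · obtain ⟨hlo, hhi⟩ := hΨ.mul_rpow_le hq hx (le_mul_of_one_le_left hx.le hs1)
    rw [Real.mul_rpow hs.le hx.le] at hlo hhi
    constructor
    · calc min (s ^ p) (s ^ q) * Ψ x ≤ s ^ q * Ψ x := by gcongr; exact min_le_right _ _
        _ ≤ Ψ (s * x) := le_of_mul_le_mul_right (by linarith) hxq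
    · calc Ψ (s * x) ≤ s ^ p * Ψ x := le_of_mul_le_mul_right (by linarith) hxp
        _ ≤ max (s ^ p) (s ^ q) * Ψ x := by gcongr; exact le_max_left _ _
  · obtain ⟨hlo, hhi⟩ := hΨ.mul_rpow_le hq (mul_pos hs hx) (mul_le_of_le_one_left hx.le hs1)
    rw [Real.mul_rpow hs.le hx.le] at hlo hhi
    constructor
    · calc min (s ^ p) (s ^ q) * Ψ x ≤ s ^ p * Ψ x := by gcongr; exact min_le_left _ _
        _ ≤ Ψ (s * x) := le_of_mul_le_mul_right (by linarith) hxp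
    · calc Ψ (s * x) ≤ s ^ q * Ψ x := le_of_mul_le_mul_right (by linarith) hxq
        _ ≤ max (s ^ p) (s ^ q) * Ψ x := by gcongr; exact le_max_right _ _

theorem deriv_ratio_mem (hΨ : memGamma Ψ p q) (hq : 0 < q) {s x : ℝ} (hs : 0 < s) (hx : 0 < x) :
    q / p * (Ψ (s * x) / Ψ x / s) ≤ deriv Ψ (s * x) / deriv Ψ x ∧
      deriv Ψ (s * x) / deriv Ψ x ≤ p / q * (Ψ (s * x) / Ψ x / s) := by
  have hsx := mul_pos hs hx
  have hΨx := hΨ.pos hq hx.ne'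
  have hΨsx := hΨ.pos hq hsx.ne'
  obtain ⟨hlo, hhi⟩ := hΨ.div_le_deriv hq hx
  obtain ⟨hlo', hhi'⟩ := hΨ.div_le_deriv hq hsx
  have hlo_pos : 0 < q * Ψ x / x := by positivity
  have hderiv_pos : 0 < deriv Ψ (s * x) := hlo'.trans_lt' (by positivity)
  constructor
  · calc q / p * (Ψ (s * x) / Ψ x / s) = (q * Ψ (s * x) / (s * x)) / (p * Ψ x / x) := by
          field_simp
      _ ≤ deriv Ψ (s * x) / deriv Ψ x :=
          div_le_div₀ hderiv_pos.le hlo' (hlo_pos.trans_le hlo) hhi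
  · calc deriv Ψ (s * x) / deriv Ψ x ≤ (p * Ψ (s * x) / (s * x)) / (q * Ψ x / x) :=
          div_le_div₀ (hderiv_pos.le.trans hhi') hhi' hlo_pos hlo
      _ = p / q * (Ψ (s * x) / Ψ x / s) := by field_simp

end memGamma

theorem stmt0 (p q : ℝ) (hq : 0 < q) (hpq : q ≤ p) (Ψ : ℝ → ℝ)
    (hΨ : memGamma Ψ p q) (s : ℝ) (hs : 0 < s) :
    min (s ^ p) (s ^ q) ≤ gammaLow Ψ s ∧
    gammaLow Ψ s ≤ gammaHigh Ψ s ∧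
    gammaHigh Ψ s ≤ max (s ^ p) (s ^ q) ∧
    q / p * (gammaLow Ψ s / s) ≤ gammaLow (deriv Ψ) s ∧
    gammaLow (deriv Ψ) s ≤ gammaHigh (deriv Ψ) s ∧
    gammaHigh (deriv Ψ) s ≤ p / q * (gammaHigh Ψ s / s) := by
  have hp : 0 < p := hq.trans_le hpq
  have hratio x (hx : 0 < x) := hΨ.ratio_mem hq hs hx
  obtain ⟨hlow, hlow_high, hhigh⟩ := le_gammaLow_le_gammaHigh_le hratio
  refine ⟨hlow, hlow_high, hhigh, le_gammaLow_le_gammaHigh_le fun x hx => ⟨?_, ?_⟩⟩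
  · calc q / p * (gammaLow Ψ s / s) ≤ q / p * (Ψ (s * x) / Ψ x / s) := by
          gcongr; exact gammaLow_le_ratio (fun x hx => (hratio x hx).1) hx
      _ ≤ deriv Ψ (s * x) / deriv Ψ x := (hΨ.deriv_ratio_mem hq hs hx).1
  · calc deriv Ψ (s * x) / deriv Ψ x ≤ p / q * (Ψ (s * x) / Ψ x / s) :=
          (hΨ.deriv_ratio_mem hq hs hx).2
      _ ≤ p / q * (gammaHigh Ψ s / s) := by
          gcongr; exact ratio_le_gammaHigh (fun x hx => (hratio x hx).2) hx
end
end

section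
/- Let J satisfy hypothesis (H₀), let Ψ ∈ Γ_{p,q} with p ≥ q > 1 and ψ = Ψ', and assume δ := inf_{s>0} ψ(s)/γ⁺_ψ(s) > 0. Let A, G : ℝ → ℝ be continuously differentiable functions with G'(s) ≥ Ψ(A'(s)) for all s ∈ ℝ. Then for every measurable u : ℝ^N → ℝ the (possibly infinite) quantities satisfy the generalized Stroock–Varopoulos inequality ℰ(u; G∘u) ≥ (δq/p) · E(A∘u). -/
open MeasureTheory Set Filter

noncomputable section

/-
For `b < a` and `h = a - b`, Jensen's inequality applied to `A a - A b`, the average of `h A'` over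
`[b, a]`, gives `Ψ (A a - A b) ≤ ⨍ Ψ (h A')`. The growth bounds `q Ψ(s) ≤ s ψ(s) ≤ p Ψ(s)` together
with `δ ψ(h t) ≤ ψ(h) ψ(t)`, which is what `δ > 0` encodes, yield `q δ Ψ(h t) ≤ p h ψ(h) Ψ(t)`, so
`(δ q / p) Ψ (A a - A b) ≤ ψ(h) ∫ Ψ(A') ≤ ψ(h) (G a - G b)`. Evenness of `Ψ` (hence oddness of `ψ`)
extends this to all `a, b`, and integrating against `J(x - y)` gives the inequality.
-/

open intervalIntegral
open scoped Interval

theorem ConvexOn.map_inv_sub_mul_intervalIntegral_le {Ψ f : ℝ → ℝ} (hΨ : ConvexOn ℝ univ Ψ)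
    (hΨc : Continuous Ψ) (hf : Continuous f) {a b : ℝ} (hab : b ≠ a) :
    Ψ ((a - b)⁻¹ * ∫ x in b..a, f x) ≤ (a - b)⁻¹ * ∫ x in b..a, Ψ (f x) := by
  have hvol : volume (Ι b a) ≠ 0 := by
    rw [Real.volume_uIoc]; simpa [sub_eq_zero] using hab.symm
  have := hΨ.map_set_average_le hΨc.continuousOn isClosed_univ hvol
    (by simp [Real.volume_uIoc]) (by simp) hf.integrableOn_uIoc (hΨc.comp hf).integrableOn_uIoc
  simpa only [interval_average_eq, smul_eq_mul] using this

theorem deriv_neg_of_even {Ψ : ℝ → ℝ} (heven : ∀ s, Ψ (-s) = Ψ s) (s : ℝ) :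
    deriv Ψ (-s) = -deriv Ψ s := by
  have h := deriv_comp_neg Ψ (x := -s)
  simp only [heven, neg_neg] at h
  linarith

theorem apply_abs_of_even {Ψ : ℝ → ℝ} (heven : ∀ s, Ψ (-s) = Ψ s) (s : ℝ) : Ψ |s| = Ψ s := by
  rcases abs_choice s with h | h <;> simp [h, heven]

section GrowthBounds

variable {Ψ : ℝ → ℝ} {p q : ℝ} (hq : 0 < q) (hnn : ∀ s, 0 ≤ Ψ s)
  (hratio : ∀ s : ℝ, s ≠ 0 → q ≤ s * deriv Ψ s / Ψ s ∧ s * deriv Ψ s / Ψ s ≤ p)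
include hq hnn hratio

theorem pos_of_growth_bounds {s : ℝ} (hs : s ≠ 0) : 0 < Ψ s := by
  refine (hnn s).lt_of_ne fun h => ?_
  have := (hratio s hs).1
  rw [← h, div_zero] at this
  linarith

theorem mul_le_mul_deriv_of_growth_bounds {s : ℝ} (hs : s ≠ 0) : q * Ψ s ≤ s * deriv Ψ s :=
  (le_div_iff₀ (pos_of_growth_bounds hq hnn hratio hs)).mp (hratio s hs).1

theorem mul_deriv_le_mul_of_growth_bounds {s : ℝ} (hs : s ≠ 0) : s * deriv Ψ s ≤ p * Ψ s :=
  (div_le_iff₀ (pos_of_growth_bounds hq hnn hratio hs)).mp (hratio s hs).2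

theorem deriv_pos_of_growth_bounds {s : ℝ} (hs : 0 < s) : 0 < deriv Ψ s := by
  have h1 := mul_pos hq (pos_of_growth_bounds hq hnn hratio hs.ne')
  have h2 := mul_le_mul_deriv_of_growth_bounds hq hnn hratio hs.ne'
  exact pos_of_mul_pos_right (h1.trans_le h2) hs.le

variable {δ : ℝ} (hδ : 0 ≤ δ)
  (hsub : ∀ s x, 0 < s → 0 < x → δ * deriv Ψ (s * x) ≤ deriv Ψ s * deriv Ψ x)
include hδ hsub

theorem mul_apply_mul_le_of_growth_bounds {h t : ℝ} (hh : 0 < h) (ht : 0 < t) :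
    q * δ * Ψ (h * t) ≤ p * h * deriv Ψ h * Ψ t := by
  have hht := mul_pos hh ht
  have hψh := deriv_pos_of_growth_bounds hq hnn hratio hh
  calc q * δ * Ψ (h * t) = δ * (q * Ψ (h * t)) := by ring
    _ ≤ δ * ((h * t) * deriv Ψ (h * t)) := mul_le_mul_of_nonneg_left
        (mul_le_mul_deriv_of_growth_bounds hq hnn hratio hht.ne') hδ
    _ = h * t * (δ * deriv Ψ (h * t)) := by ring
    _ ≤ h * t * (deriv Ψ h * deriv Ψ t) := mul_le_mul_of_nonneg_left (hsub h t hh ht) hht.le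
    _ = h * deriv Ψ h * (t * deriv Ψ t) := by ring
    _ ≤ h * deriv Ψ h * (p * Ψ t) := mul_le_mul_of_nonneg_left
        (mul_deriv_le_mul_of_growth_bounds hq hnn hratio ht.ne') (mul_pos hh hψh).le
    _ = p * h * deriv Ψ h * Ψ t := by ring

theorem mul_apply_mul_le_of_growth_bounds_of_even (heven : ∀ s, Ψ (-s) = Ψ s) (h0 : Ψ 0 = 0)
    {h : ℝ} (hh : 0 < h) (t : ℝ) :
    q * δ * Ψ (h * t) ≤ p * h * deriv Ψ h * Ψ t := by
  rcases eq_or_ne t 0 with rfl | ht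
  · simp [h0]
  · rw [← apply_abs_of_even heven (h * t), abs_mul, abs_of_pos hh, ← apply_abs_of_even heven t]
    exact mul_apply_mul_le_of_growth_bounds hq hnn hratio hδ hsub hh (abs_pos.mpr ht)

end GrowthBounds

theorem apply_mul_le_gammaHigh_mul {g : ℝ → ℝ} {s x : ℝ} (hx : 0 < x) (hgx : 0 < g x)
    (hγ : 0 < gammaHigh g s) : g (s * x) ≤ gammaHigh g s * g x := by
  have hbdd : BddAbove {r : ℝ | ∃ x : ℝ, 0 < x ∧ r = g (s * x) / g x} := by
    by_contra h
    rw [gammaHigh, Real.sSup_of_not_bddAbove h] at hγ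
    exact hγ.false
  exact (div_le_iff₀ hgx).mp (le_csSup hbdd ⟨x, hx, rfl⟩)

theorem mul_apply_mul_le_of_eq_sInf_div_gammaHigh {g : ℝ → ℝ} (hg : ∀ x, 0 < x → 0 < g x)
    {δ : ℝ} (hδdef : δ = sInf {r : ℝ | ∃ s : ℝ, 0 < s ∧ r = g s / gammaHigh g s}) (hδ : 0 < δ)
    {s x : ℝ} (hs : 0 < s) (hx : 0 < x) : δ * g (s * x) ≤ g s * g x := by
  -- `sInf` of a set that is not bounded below is `0`.
  have hbdd : BddBelow {r : ℝ | ∃ s : ℝ, 0 < s ∧ r = g s / gammaHigh g s} := by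
    by_contra h
    rw [hδdef, Real.sInf_of_not_bddBelow h] at hδ
    exact hδ.false
  have hδle : δ ≤ g s / gammaHigh g s := hδdef ▸ csInf_le hbdd ⟨s, hs, rfl⟩
  have hγ : 0 < gammaHigh g s := by
    by_contra! h
    linarith [div_nonpos_of_nonneg_of_nonpos (hg s hs).le h]
  calc δ * g (s * x) ≤ δ * (gammaHigh g s * g x) :=
        mul_le_mul_of_nonneg_left (apply_mul_le_gammaHigh_mul hx (hg x hx) hγ) hδ.le
    _ = δ * gammaHigh g s * g x := by ring
    _ ≤ g s * g x := mul_le_mul_of_nonneg_right ((le_div_iff₀ hγ).mp hδle) (hg x hx).le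

section TwoPoint

variable {Ψ A G : ℝ → ℝ} {c : ℝ} (hc : 0 ≤ c) (hΨ : ConvexOn ℝ univ Ψ) (hΨc : Continuous Ψ)
  (hψ : ∀ h, 0 < h → 0 ≤ deriv Ψ h) (hpt : ∀ h, 0 < h → ∀ t, c * Ψ (h * t) ≤ h * deriv Ψ h * Ψ t)
  (hA : ContDiff ℝ 1 A) (hG : ContDiff ℝ 1 G) (hGA : ∀ s, Ψ (deriv A s) ≤ deriv G s)
include hc hΨ hΨc hψ hpt hA hG hGA

theorem mul_apply_sub_le_of_lt {a b : ℝ} (hba : b < a) :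
    c * Ψ (A a - A b) ≤ deriv Ψ (a - b) * (G a - G b) := by
  have hh : 0 < a - b := sub_pos.mpr hba
  have hA' : Continuous (deriv A) := hA.continuous_deriv le_rfl
  have hG' : Continuous (deriv G) := hG.continuous_deriv le_rfl
  have hAG_int : IntervalIntegrable (fun s => Ψ (deriv A s)) volume b a :=
    (hΨc.comp hA').intervalIntegrable b a
  have hftcA : ∫ s in b..a, deriv A s = A a - A b :=
    integral_deriv_eq_sub (fun x _ => (hA.differentiable one_ne_zero).differentiableAt)
      (hA'.intervalIntegrable b a)
  have hftcG : ∫ s in b..a, deriv G s = G a - G b :=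
    integral_deriv_eq_sub (fun x _ => (hG.differentiable one_ne_zero).differentiableAt)
      (hG'.intervalIntegrable b a)
  have hjensen : Ψ (A a - A b) ≤ (a - b)⁻¹ * ∫ s in b..a, Ψ ((a - b) * deriv A s) := by
    have := hΨ.map_inv_sub_mul_intervalIntegral_le (f := fun s => (a - b) * deriv A s) hΨc
      (continuous_const.mul hA') hba.ne
    rwa [intervalIntegral.integral_const_mul, hftcA, inv_mul_cancel_left₀ hh.ne'] at this
  calc c * Ψ (A a - A b) ≤ c * ((a - b)⁻¹ * ∫ s in b..a, Ψ ((a - b) * deriv A s)) :=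
        mul_le_mul_of_nonneg_left hjensen hc
    _ = (a - b)⁻¹ * ∫ s in b..a, c * Ψ ((a - b) * deriv A s) := by
        rw [intervalIntegral.integral_const_mul]; ring
    _ ≤ (a - b)⁻¹ * ∫ s in b..a, (a - b) * deriv Ψ (a - b) * Ψ (deriv A s) := by
        refine mul_le_mul_of_nonneg_left (integral_mono_on hba.le ?_ ?_ fun s _ => hpt _ hh _)
          (inv_nonneg.mpr hh.le)
        · exact ((hΨc.comp (continuous_const.mul hA')).intervalIntegrable b a).const_mul c
        · exact hAG_int.const_mul _
    _ = deriv Ψ (a - b) * ∫ s in b..a, Ψ (deriv A s) := by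
        rw [intervalIntegral.integral_const_mul]; field_simp
    _ ≤ deriv Ψ (a - b) * (G a - G b) := by
        refine mul_le_mul_of_nonneg_left ?_ (hψ _ hh)
        rw [← hftcG]
        exact integral_mono_on hba.le hAG_int (hG'.intervalIntegrable b a) fun s _ => hGA s

theorem mul_apply_sub_le (heven : ∀ s, Ψ (-s) = Ψ s) (h0 : Ψ 0 = 0) (a b : ℝ) :
    c * Ψ (A a - A b) ≤ deriv Ψ (a - b) * (G a - G b) := by
  rcases lt_trichotomy b a with hba | rfl | hab
  · exact mul_apply_sub_le_of_lt hc hΨ hΨc hψ hpt hA hG hGA hba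
  · simp [h0]
  · have := mul_apply_sub_le_of_lt hc hΨ hΨc hψ hpt hA hG hGA hab
    rw [← neg_sub, heven, ← neg_sub a b, deriv_neg_of_even heven] at this
    linarith

end TwoPoint

theorem ofReal_mul_le_ofReal_mul_of_le {x y : ℝ} (hx : 0 ≤ x) (hxy : x ≤ y) (z : ℝ) :
    ENNReal.ofReal (x * z) ≤ ENNReal.ofReal (y * z) := by
  rcases le_total 0 z with hz | hz
  · exact ENNReal.ofReal_le_ofReal (mul_le_mul_of_nonneg_right hxy hz)
  · simp [ENNReal.ofReal_of_nonpos (mul_nonpos_of_nonneg_of_nonpos hx hz)]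

theorem stmt5_general (N : ℕ) (J : EuclideanSpace ℝ (Fin N) → ℝ)
    (p q : ℝ) (hq : 1 < q) (hpq : q ≤ p) (Ψ : ℝ → ℝ) (hΨ : memGamma Ψ p q)
    (δ : ℝ)
    (hδdef : δ = sInf {r : ℝ | ∃ s : ℝ, 0 < s ∧ r = deriv Ψ s / gammaHigh (deriv Ψ) s})
    (hδ : 0 < δ)
    (A G : ℝ → ℝ) (hA : ContDiff ℝ 1 A) (hG : ContDiff ℝ 1 G)
    (hGA : ∀ s : ℝ, Ψ (deriv A s) ≤ deriv G s)
    (u : EuclideanSpace ℝ (Fin N) → ℝ) :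
    ENNReal.ofReal (δ * q / p) * funcE N Ψ J (fun x => A (u x)) ≤
      interEplus N (deriv Ψ) J u (fun x => G (u x)) := by
  obtain ⟨hconv, heven, hcd, hnn, h0, -, hratio⟩ := hΨ
  have hq0 : 0 < q := by linarith
  have hp0 : 0 < p := by linarith
  have hψ h (hh : 0 < h) : 0 < deriv Ψ h := deriv_pos_of_growth_bounds hq0 hnn hratio hh
  have hsub s x (hs : 0 < s) (hx : 0 < x) : δ * deriv Ψ (s * x) ≤ deriv Ψ s * deriv Ψ x :=
    mul_apply_mul_le_of_eq_sInf_div_gammaHigh hψ hδdef hδ hs hx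
  have hpt h (hh : 0 < h) t : δ * q / p * Ψ (h * t) ≤ h * deriv Ψ h * Ψ t := by
    have := mul_apply_mul_le_of_growth_bounds_of_even hq0 hnn hratio hδ.le hsub heven h0 hh t
    rw [div_mul_eq_mul_div, div_le_iff₀ hp0]
    linarith
  have hkey := mul_apply_sub_le (by positivity) hconv hcd.continuous (fun h hh => (hψ h hh).le)
    hpt hA hG hGA heven h0
  unfold funcE interEplus
  rw [mul_left_comm, ← lintegral_const_mul' _ _ ENNReal.ofReal_ne_top]
  gcongr with x
  rw [← lintegral_const_mul' _ _ ENNReal.ofReal_ne_top]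
  gcongr with y
  rw [← ENNReal.ofReal_mul (by positivity), ← mul_assoc]
  exact ofReal_mul_le_ofReal_mul_of_le (by have := hnn (A (u x) - A (u y)); positivity)
    (hkey (u x) (u y)) _

theorem stmt5 (N : ℕ) (q₀ : ℝ) (J : EuclideanSpace ℝ (Fin N) → ℝ) (hJ : kernelH0 N J q₀)
    (p q : ℝ) (hq : 1 < q) (hpq : q ≤ p) (Ψ : ℝ → ℝ) (hΨ : memGamma Ψ p q)
    (δ : ℝ)
    (hδdef : δ = sInf {r : ℝ | ∃ s : ℝ, 0 < s ∧ r = deriv Ψ s / gammaHigh (deriv Ψ) s})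
    (hδ : 0 < δ)
    (A G : ℝ → ℝ) (hA : ContDiff ℝ 1 A) (hG : ContDiff ℝ 1 G)
    (hGA : ∀ s : ℝ, Ψ (deriv A s) ≤ deriv G s)
    (u : EuclideanSpace ℝ (Fin N) → ℝ) (hu : Measurable u) :
    ENNReal.ofReal (δ * q / p) * funcE N Ψ J (fun x => A (u x)) ≤
      interEplus N (deriv Ψ) J u (fun x => G (u x)) :=
  stmt5_general N J p q hq hpq Ψ hΨ δ hδdef hδ A G hA hG hGA u
end
end

section
/- Let ψ : ℝ → ℝ be a continuous, nondecreasing, odd function, differentiable on ℝ∖{0}, with ψ(s) > 0 for s > 0 and satisfying sψ'(s) ≥ ψ(s) for every s ≠ 0, and let Ψ(t) = ∫₀^t ψ(s) ds. Then for all a, b ∈ ℝ: (ψ(a) − ψ(b))(a − b) ≥ 4 Ψ((a − b)/2). -/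
open MeasureTheory Set Filter

noncomputable section

/-!
The condition `s ψ'(s) ≥ ψ(s)` says that `ψ(s)/s` is nondecreasing on `(0, ∞)`. This gives
`ψ(s) ≤ (s/h) ψ(h)` on `[0, h]`, hence `2 Ψ(h) ≤ h ψ(h)`, and it makes `ψ` superadditive on
`[0, ∞)`. Superadditivity and oddness give `ψ((a - b)/2) ≤ ψ(a) - ψ(b)` for `b ≤ a`, and with
`h = (a - b)/2` the two bounds combine to `4 Ψ(h) ≤ 2h ψ(h) ≤ (ψ(a) - ψ(b))(a - b)`.
-/

section

variable {ψ : ℝ → ℝ}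

theorem monotoneOn_div_self_of_le_mul_deriv (hdiff : ∀ s, 0 < s → DifferentiableAt ℝ ψ s)
    (hineq : ∀ s, 0 < s → ψ s ≤ s * deriv ψ s) :
    MonotoneOn (fun s => ψ s / s) (Ioi 0) := by
  have hderiv : ∀ s ∈ Ioi (0 : ℝ),
      HasDerivAt (fun t => ψ t / t) ((deriv ψ s * s - ψ s * 1) / s ^ 2) s :=
    fun s hs => (hdiff s hs).hasDerivAt.div (hasDerivAt_id s) (ne_of_gt hs)
  apply monotoneOn_of_deriv_nonneg (convex_Ioi 0)
  · exact fun s hs => (hderiv s hs).continuousAt.continuousWithinAt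
  · rw [interior_Ioi]
    exact fun s hs => (hderiv s hs).differentiableAt.differentiableWithinAt
  · rw [interior_Ioi]
    intro s hs
    rw [(hderiv s hs).deriv]
    have := hineq s hs
    exact div_nonneg (by linarith [mul_comm s (deriv ψ s)]) (sq_nonneg s)

theorem le_mul_div_of_monotoneOn_div_self (hψ : MonotoneOn (fun s => ψ s / s) (Ioi 0))
    {s h : ℝ} (hs : 0 < s) (hsh : s ≤ h) : ψ s ≤ s * (ψ h / h) := by
  have := hψ hs (hs.trans_le hsh) hsh
  rwa [div_le_iff₀ hs, mul_comm] at this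

theorem add_le_of_monotoneOn_div_self (hψ : MonotoneOn (fun s => ψ s / s) (Ioi 0))
    (h0 : ψ 0 = 0) {x y : ℝ} (hx : 0 ≤ x) (hy : 0 ≤ y) : ψ x + ψ y ≤ ψ (x + y) := by
  rcases hx.eq_or_lt with rfl | hx
  · simp [h0]
  rcases hy.eq_or_lt with rfl | hy
  · simp [h0]
  have hxy : 0 < x + y := add_pos hx hy
  have hx' := le_mul_div_of_monotoneOn_div_self hψ hx (le_add_of_nonneg_right hy.le)
  have hy' := le_mul_div_of_monotoneOn_div_self hψ hy (le_add_of_nonneg_left hx.le)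
  calc ψ x + ψ y ≤ (x + y) * (ψ (x + y) / (x + y)) := by linarith
    _ = ψ (x + y) := mul_div_cancel₀ _ hxy.ne'

theorem two_mul_integral_le_mul_of_monotoneOn_div_self
    (hψ : MonotoneOn (fun s => ψ s / s) (Ioi 0)) (hcont : Continuous ψ) {h : ℝ} (hh : 0 ≤ h) :
    2 * ∫ s in (0 : ℝ)..h, ψ s ≤ h * ψ h := by
  rcases hh.eq_or_lt with rfl | hh
  · simp
  have hint : ∫ s in (0 : ℝ)..h, ψ s ≤ ∫ s in (0 : ℝ)..h, s * (ψ h / h) :=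
    intervalIntegral.integral_mono_on_of_le_Ioo hh.le (hcont.intervalIntegrable _ _)
      ((continuous_id.mul continuous_const).intervalIntegrable _ _)
      fun s hs => le_mul_div_of_monotoneOn_div_self hψ hs.1 hs.2.le
  rw [intervalIntegral.integral_mul_const, integral_id] at hint
  calc 2 * ∫ s in (0 : ℝ)..h, ψ s ≤ 2 * ((h ^ 2 - 0 ^ 2) / 2 * (ψ h / h)) := by linarith
    _ = h * ψ h := by field_simp; ring

theorem apply_add_div_two_le_add (hmono : Monotone ψ) (hodd : ψ.Odd)
    (hsuper : ∀ x y, 0 ≤ x → 0 ≤ y → ψ x + ψ y ≤ ψ (x + y)) {x y : ℝ} (hxy : 0 ≤ x + y) :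
    ψ ((x + y) / 2) ≤ ψ x + ψ y := by
  wlog hyx : y ≤ x generalizing x y
  · have := this (x := y) (y := x) (by linarith) (le_of_not_ge hyx)
    rwa [add_comm y x, add_comm (ψ y)] at this
  rcases le_or_gt 0 y with hy | hy
  · have hψy : ψ 0 ≤ ψ y := hmono hy
    have hψx : ψ ((x + y) / 2) ≤ ψ x := hmono (by linarith)
    linarith [hodd.map_zero]
  · have hsplit := hsuper (x + y) (-y) hxy (by linarith)
    rw [add_neg_cancel_right, hodd] at hsplit
    have : ψ ((x + y) / 2) ≤ ψ (x + y) := hmono (by linarith)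
    linarith

theorem intervalIntegral_zero_neg_of_odd (hodd : ψ.Odd) (t : ℝ) :
    ∫ s in (0 : ℝ)..-t, ψ s = ∫ s in (0 : ℝ)..t, ψ s := by
  have := intervalIntegral.integral_comp_neg (a := 0) (b := t) ψ
  simp only [hodd.eq, intervalIntegral.integral_neg, neg_zero] at this
  rw [intervalIntegral.integral_symm]
  linarith

end

theorem stmt6_general (ψ : ℝ → ℝ) (hcont : Continuous ψ) (hmono : Monotone ψ)
    (hodd : ∀ s, ψ (-s) = -ψ s)
    (hdiff : ∀ s : ℝ, s ≠ 0 → DifferentiableAt ℝ ψ s)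
    (hineq : ∀ s : ℝ, s ≠ 0 → ψ s ≤ s * deriv ψ s)
    (Ψ : ℝ → ℝ) (hΨ : ∀ t, Ψ t = ∫ s in (0:ℝ)..t, ψ s)
    (a b : ℝ) :
    4 * Ψ ((a - b) / 2) ≤ (ψ a - ψ b) * (a - b) := by
  have hratio := monotoneOn_div_self_of_le_mul_deriv (fun s hs => hdiff s hs.ne')
    (fun s hs => hineq s hs.ne')
  have hsuper : ∀ x y, 0 ≤ x → 0 ≤ y → ψ x + ψ y ≤ ψ (x + y) := fun _ _ =>
    add_le_of_monotoneOn_div_self hratio (Function.Odd.map_zero hodd)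
  wlog hba : b ≤ a generalizing a b
  · have := this b a (le_of_not_ge hba)
    rw [show (a - b) / 2 = -((b - a) / 2) by ring, hΨ, intervalIntegral_zero_neg_of_odd hodd,
      ← hΨ]
    linarith
  have hh : 0 ≤ (a - b) / 2 := by linarith
  have hint := two_mul_integral_le_mul_of_monotoneOn_div_self hratio hcont hh
  have hmid := apply_add_div_two_le_add hmono hodd hsuper (x := a) (y := -b) (by linarith)
  rw [hodd, ← sub_eq_add_neg, ← sub_eq_add_neg] at hmid
  calc 4 * Ψ ((a - b) / 2) = 2 * (2 * ∫ s in (0 : ℝ)..(a - b) / 2, ψ s) := by rw [hΨ]; ring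
    _ ≤ 2 * ((a - b) / 2 * ψ ((a - b) / 2)) := by gcongr
    _ ≤ 2 * ((a - b) / 2 * (ψ a - ψ b)) := by gcongr
    _ = (ψ a - ψ b) * (a - b) := by ring

theorem stmt6 (ψ : ℝ → ℝ) (hcont : Continuous ψ) (hmono : Monotone ψ)
    (hodd : ∀ s, ψ (-s) = -ψ s)
    (hdiff : ∀ s : ℝ, s ≠ 0 → DifferentiableAt ℝ ψ s)
    (hpos : ∀ s : ℝ, 0 < s → 0 < ψ s)
    (hineq : ∀ s : ℝ, s ≠ 0 → ψ s ≤ s * deriv ψ s)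
    (Ψ : ℝ → ℝ) (hΨ : ∀ t, Ψ t = ∫ s in (0:ℝ)..t, ψ s)
    (a b : ℝ) :
    4 * Ψ ((a - b) / 2) ≤ (ψ a - ψ b) * (a - b) :=
  stmt6_general ψ hcont hmono hodd hdiff hineq Ψ hΨ a b
end
end

section
/- Let ψ : ℝ → ℝ be a continuous, nondecreasing, odd function which is concave and continuously differentiable on (0,∞), with ψ' nonincreasing on (0,∞), and let Ψ(t) = ∫₀^t ψ(s) ds. Then for all a, b ∈ ℝ with |a| + |b| > 0: (ψ(a) − ψ(b))(a − b) ≥ ψ'(|a| + |b|)(a − b)². -/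
open MeasureTheory Set Filter

noncomputable section

/-!
Put `c = |a| + |b|` and `g t = ψ t - ψ'(c) t`. Since `ψ'` is nonincreasing on `(0, ∞)`, `g' ≥ 0` on
`(0, c)`, so `g` is nondecreasing on `[0, c]`, and, being odd, on `[-c, c]`, which contains `a` and
`b`. The inequality is `(g a - g b) (a - b) ≥ 0`.
-/

theorem monotoneOn_Icc_neg_of_odd {G H : Type*} [AddCommGroup G] [LinearOrder G]
    [IsOrderedAddMonoid G] [AddCommGroup H] [PartialOrder H] [IsOrderedAddMonoid H]
    {f : G → H} {c : G} (hodd : ∀ x, f (-x) = -f x) (hmono : MonotoneOn f (Icc 0 c)) :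
    MonotoneOn f (Icc (-c) c) := by
  rcases lt_or_ge c 0 with hc | hc
  · intro x hx _ _ _
    exact absurd (hx.1.trans hx.2) (not_le.2 (hc.trans (neg_pos.2 hc)))
  have hneg : MonotoneOn f (Icc (-c) 0) := fun x hx y hy hxy => by
    rw [← neg_le_neg_iff, ← hodd, ← hodd]
    exact hmono ⟨neg_nonneg.2 hy.2, neg_le.1 hy.1⟩ ⟨neg_nonneg.2 hx.2, neg_le.1 hx.1⟩
      (neg_le_neg hxy)
  rw [← Icc_union_Icc_eq_Icc (neg_nonpos.2 hc) hc]
  exact hneg.union_right hmono (isGreatest_Icc (neg_nonpos.2 hc)) (isLeast_Icc hc)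

theorem monotoneOn_sub_mul_of_le_deriv {f : ℝ → ℝ} {a b C : ℝ} (hf : ContinuousOn f (Icc a b))
    (hf' : DifferentiableOn ℝ f (Ioo a b)) (hC : ∀ x ∈ Ioo a b, C ≤ deriv f x) :
    MonotoneOn (fun t => f t - C * t) (Icc a b) := fun x hx y hy hxy => by
  have := (convex_Icc a b).mul_sub_le_image_sub_of_le_deriv hf (by rwa [interior_Icc])
    (by rwa [interior_Icc]) x hx y hy hxy
  dsimp only
  linarith

theorem MonotoneOn.mul_sub_nonneg {α : Type*} [Ring α] [LinearOrder α] [IsStrictOrderedRing α]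
    {f : α → α} {s : Set α} (hf : MonotoneOn f s) {a b : α}
    (ha : a ∈ s) (hb : b ∈ s) : 0 ≤ (f a - f b) * (a - b) := by
  rcases le_total a b with hab | hab
  · exact mul_nonneg_of_nonpos_of_nonpos (sub_nonpos.2 (hf ha hb hab)) (sub_nonpos.2 hab)
  · exact mul_nonneg (sub_nonneg.2 (hf hb ha hab)) (sub_nonneg.2 hab)

theorem stmt7_general (ψ : ℝ → ℝ) (hcont : Continuous ψ)
    (hodd : ∀ s, ψ (-s) = -ψ s)
    (hdiff : ∀ s ∈ Set.Ioi (0:ℝ), DifferentiableAt ℝ ψ s)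
    (hanti : AntitoneOn (deriv ψ) (Set.Ioi 0))
    (a b : ℝ) (hab : 0 < |a| + |b|) :
    deriv ψ (|a| + |b|) * (a - b) ^ 2 ≤ (ψ a - ψ b) * (a - b) := by
  set c := |a| + |b|
  set g : ℝ → ℝ := fun t => ψ t - deriv ψ c * t
  have hg_mono : MonotoneOn g (Icc 0 c) :=
    monotoneOn_sub_mul_of_le_deriv hcont.continuousOn
      (fun x hx => (hdiff x hx.1).differentiableWithinAt)
      (fun x hx => hanti hx.1 hab hx.2.le)
  have hg_odd : ∀ t, g (-t) = -g t := fun t => by simp only [g, hodd]; ring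
  have ha : a ∈ Icc (-c) c := by
    constructor <;> linarith [neg_abs_le a, le_abs_self a, abs_nonneg b]
  have hb : b ∈ Icc (-c) c := by
    constructor <;> linarith [neg_abs_le b, le_abs_self b, abs_nonneg a]
  have hsplit : (ψ a - ψ b) * (a - b) - deriv ψ c * (a - b) ^ 2 = (g a - g b) * (a - b) := by
    simp only [g]; ring
  linarith [(monotoneOn_Icc_neg_of_odd hg_odd hg_mono).mul_sub_nonneg ha hb]

theorem stmt7 (ψ : ℝ → ℝ) (hcont : Continuous ψ) (hmono : Monotone ψ)
    (hodd : ∀ s, ψ (-s) = -ψ s)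
    (hconc : ConcaveOn ℝ (Set.Ioi 0) ψ)
    (hdiff : ∀ s ∈ Set.Ioi (0:ℝ), DifferentiableAt ℝ ψ s)
    (hderivcont : ContinuousOn (deriv ψ) (Set.Ioi 0))
    (hanti : AntitoneOn (deriv ψ) (Set.Ioi 0))
    (Ψ : ℝ → ℝ) (hΨ : ∀ t, Ψ t = ∫ s in (0:ℝ)..t, ψ s)
    (a b : ℝ) (hab : 0 < |a| + |b|) :
    deriv ψ (|a| + |b|) * (a - b) ^ 2 ≤ (ψ a - ψ b) * (a - b) :=
  stmt7_general ψ hcont hodd hdiff hanti a b hab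
end
end

section
/- Let 1 < p < 2 and let ψ : ℝ → ℝ be a continuous, nondecreasing, odd function, differentiable on ℝ∖{0}, satisfying c₁|s|^{p−2} ≤ ψ'(s) ≤ c₂|s|^{p−2} for all s ≠ 0, where c₂ ≥ c₁ > 0; let Ψ(t) = ∫₀^t ψ(s) ds. Then there exists a constant c > 0, depending only on p, c₁, c₂, such that for all a, b ∈ ℝ not both zero: (ψ(a) − ψ(b))(a − b) ≥ c · Ψ(a − b)^{2/p} / (Ψ(a) + Ψ(b))^{(2−p)/p}. -/
open MeasureTheory Set Filter

noncomputable section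

/-!
Write `M = max |a| |b|`. The derivative bound gives `ψ' ≥ c₁ M^(p-2)` on `[-M, M]` away from `0`
(this is where `p < 2` enters), so `(ψ a - ψ b)(a - b) ≥ c₁ M^(p-2) (a - b)²`. Integrating the
derivative bounds twice gives `Ψ t ≍ |t|^p`, hence `Ψ(a - b)^(2/p) ≲ (a - b)²` and
`(Ψ a + Ψ b)^((2-p)/p) ≳ M^(2-p)`, and the two estimates combine to the claim.
-/

theorem image_le_of_hasDerivAt_le_Ioi {f g f' g' : ℝ → ℝ} {a t : ℝ}
    (hf : ContinuousOn f (Ici a)) (hg : ContinuousOn g (Ici a))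
    (hf' : ∀ x ∈ Ioi a, HasDerivAt f (f' x) x) (hg' : ∀ x ∈ Ioi a, HasDerivAt g (g' x) x)
    (hle : ∀ x ∈ Ioi a, f' x ≤ g' x) (ha : f a ≤ g a) (ht : a ≤ t) : f t ≤ g t := by
  have hmono : MonotoneOn (fun x => g x - f x) (Ici a) := by
    refine monotoneOn_of_hasDerivWithinAt_nonneg (f' := fun x => g' x - f' x) (convex_Ici a)
      (hg.sub hf) ?_ ?_ <;> rw [interior_Ici]
    · exact fun x hx => ((hg' x hx).sub (hf' x hx)).hasDerivWithinAt
    · exact fun x hx => sub_nonneg.2 (hle x hx)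
  have := hmono self_mem_Ici ht ht
  simp only at this
  linarith

theorem hasDerivAt_div_mul_rpow {C r x : ℝ} (hr : r ≠ 0) (hx : 0 < x) :
    HasDerivAt (fun y => C / r * y ^ r) (C * x ^ (r - 1)) x := by
  have := (Real.hasDerivAt_rpow_const (p := r) (Or.inl hx.ne')).const_mul (C / r)
  rwa [← mul_assoc, div_mul_cancel₀ _ hr] at this

theorem le_div_mul_rpow_of_deriv_le {f f' : ℝ → ℝ} {C r t : ℝ} (hr : 0 < r)
    (hf : ContinuousOn f (Ici 0)) (h0 : f 0 = 0) (hf' : ∀ x > 0, HasDerivAt f (f' x) x)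
    (hle : ∀ x > 0, f' x ≤ C * x ^ (r - 1)) (ht : 0 ≤ t) : f t ≤ C / r * t ^ r :=
  image_le_of_hasDerivAt_le_Ioi hf ((Real.continuous_rpow_const hr.le).const_mul _).continuousOn
    hf' (fun _ hx => hasDerivAt_div_mul_rpow hr.ne' hx) hle
    (by simp [h0, Real.zero_rpow hr.ne']) ht

theorem div_mul_rpow_le_of_le_deriv {f f' : ℝ → ℝ} {C r t : ℝ} (hr : 0 < r)
    (hf : ContinuousOn f (Ici 0)) (h0 : f 0 = 0) (hf' : ∀ x > 0, HasDerivAt f (f' x) x)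
    (hle : ∀ x > 0, C * x ^ (r - 1) ≤ f' x) (ht : 0 ≤ t) : C / r * t ^ r ≤ f t :=
  image_le_of_hasDerivAt_le_Ioi ((Real.continuous_rpow_const hr.le).const_mul _).continuousOn hf
    (fun _ hx => hasDerivAt_div_mul_rpow hr.ne' hx) hf' hle
    (by simp [h0, Real.zero_rpow hr.ne']) ht

theorem mul_sub_le_image_sub_of_le_deriv_of_ne {f : ℝ → ℝ} {k l u c x y : ℝ}
    (hf : ContinuousOn f (Icc l u)) (hc : c ∈ Icc l u)
    (hf' : ∀ z ∈ Ioo l u, z ≠ c → DifferentiableAt ℝ f z)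
    (hk : ∀ z ∈ Ioo l u, z ≠ c → k ≤ deriv f z)
    (hx : x ∈ Icc l u) (hy : y ∈ Icc l u) (hxy : x ≤ y) : k * (y - x) ≤ f y - f x := by
  have piece : ∀ l' u', Icc l' u' ⊆ Icc l u → (∀ z ∈ Ioo l' u', z ∈ Ioo l u ∧ z ≠ c) →
      MonotoneOn (fun z => f z - k * z) (Icc l' u') := by
    intro l' u' hsub hint v hv w hw hvw
    have := (convex_Icc l' u').mul_sub_le_image_sub_of_le_deriv (hf.mono hsub)
      (by
        rw [interior_Icc]
        exact fun z hz => (hf' z (hint z hz).1 (hint z hz).2).differentiableWithinAt)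
      (by rw [interior_Icc]; exact fun z hz => hk z (hint z hz).1 (hint z hz).2) v hv w hw hvw
    simp only
    linarith
  have hmono := (piece l c (Icc_subset_Icc le_rfl hc.2)
      fun z hz => ⟨⟨hz.1, hz.2.trans_le hc.2⟩, hz.2.ne⟩).union_right
    (piece c u (Icc_subset_Icc hc.1 le_rfl) fun z hz => ⟨⟨hc.1.trans_lt hz.1, hz.2⟩, hz.1.ne'⟩)
    (isGreatest_Icc hc.1) (isLeast_Icc hc.2)
  rw [Icc_union_Icc_eq_Icc hc.1 hc.2] at hmono
  have := hmono hx hy hxy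
  simp only at this
  linarith

theorem mul_rpow_mul_sq_le_sub_mul_sub {ψ : ℝ → ℝ} {p c₁ S a b : ℝ} (hp : p ≤ 2) (hc₁ : 0 ≤ c₁)
    (hcont : Continuous ψ) (hdiff : ∀ s : ℝ, s ≠ 0 → DifferentiableAt ℝ ψ s)
    (hlow : ∀ s : ℝ, s ≠ 0 → c₁ * |s| ^ (p - 2) ≤ deriv ψ s) (ha : |a| ≤ S) (hb : |b| ≤ S) :
    c₁ * S ^ (p - 2) * (a - b) ^ 2 ≤ (ψ a - ψ b) * (a - b) := by
  have hS : (0 : ℝ) ∈ Icc (-S) S := ⟨by linarith [abs_nonneg a], (abs_nonneg a).trans ha⟩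
  have hderiv : ∀ z ∈ Ioo (-S) S, z ≠ 0 → c₁ * S ^ (p - 2) ≤ deriv ψ z := fun z hz hz0 =>
    calc c₁ * S ^ (p - 2) ≤ c₁ * |z| ^ (p - 2) := by
          gcongr c₁ * ?_
          exact Real.rpow_le_rpow_of_nonpos (abs_pos.2 hz0) (abs_lt.2 hz).le (by linarith)
      _ ≤ deriv ψ z := hlow z hz0
  have gap : ∀ x y, |x| ≤ S → |y| ≤ S → x ≤ y → c₁ * S ^ (p - 2) * (y - x) ≤ ψ y - ψ x :=
    fun x y hx hy hxy => mul_sub_le_image_sub_of_le_deriv_of_ne hcont.continuousOn hS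
      (fun z _ hz0 => hdiff z hz0) hderiv (abs_le.1 hx) (abs_le.1 hy) hxy
  rcases le_total b a with hba | hab
  · have := mul_le_mul_of_nonneg_right (gap b a hb ha hba) (sub_nonneg.2 hba)
    linarith
  · have := mul_le_mul_of_nonneg_right (gap a b ha hb hab) (sub_nonneg.2 hab)
    linarith

theorem integral_zero_neg_eq_of_odd {ψ : ℝ → ℝ} (hodd : ∀ s, ψ (-s) = -ψ s) (t : ℝ) :
    ∫ s in (0 : ℝ)..-t, ψ s = ∫ s in (0 : ℝ)..t, ψ s := by
  have h := intervalIntegral.integral_comp_neg (a := 0) (b := t) ψ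
  simp only [hodd, intervalIntegral.integral_neg, neg_zero] at h
  rw [intervalIntegral.integral_symm, ← h, neg_neg]

theorem rpow_div_rpow_le_rpow_mul_sq {p C₁ C₂ X Y M d : ℝ} (hp : 0 < p) (hp2 : p ≤ 2)
    (hC₁ : 0 < C₁) (hC₂ : 0 < C₂) (hM : 0 < M) (hX₀ : 0 ≤ X) (hX : X ≤ C₂ * |d| ^ p)
    (hY : C₁ * M ^ p ≤ Y) :
    C₁ ^ ((2 - p) / p) / C₂ ^ (2 / p) * X ^ (2 / p) / Y ^ ((2 - p) / p) ≤ M ^ (p - 2) * d ^ 2 := by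
  have hnum : X ^ (2 / p) ≤ C₂ ^ (2 / p) * d ^ 2 :=
    calc X ^ (2 / p) ≤ (C₂ * |d| ^ p) ^ (2 / p) := by gcongr
      _ = C₂ ^ (2 / p) * d ^ 2 := by
        rw [Real.mul_rpow hC₂.le (by positivity), ← Real.rpow_mul (abs_nonneg d),
          mul_div_cancel₀ _ hp.ne', Real.rpow_two, sq_abs]
  have hden : C₁ ^ ((2 - p) / p) * M ^ (2 - p) ≤ Y ^ ((2 - p) / p) :=
    calc C₁ ^ ((2 - p) / p) * M ^ (2 - p) = (C₁ * M ^ p) ^ ((2 - p) / p) := by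
          rw [Real.mul_rpow hC₁.le (by positivity), ← Real.rpow_mul hM.le,
            mul_div_cancel₀ _ hp.ne']
      _ ≤ Y ^ ((2 - p) / p) := by gcongr
  have hMp : M ^ (p - 2) = (M ^ (2 - p))⁻¹ := by
    rw [← Real.rpow_neg hM.le, neg_sub]
  calc C₁ ^ ((2 - p) / p) / C₂ ^ (2 / p) * X ^ (2 / p) / Y ^ ((2 - p) / p)
      ≤ C₁ ^ ((2 - p) / p) / C₂ ^ (2 / p) * (C₂ ^ (2 / p) * d ^ 2)
          / (C₁ ^ ((2 - p) / p) * M ^ (2 - p)) := by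
        gcongr
    _ = M ^ (p - 2) * d ^ 2 := by
        rw [hMp]
        field_simp

section

variable {p c₁ c₂ : ℝ} {ψ Ψ : ℝ → ℝ}

theorem rpow_bounds_of_deriv_rpow_bounds (hp : 1 < p) (hcont : Continuous ψ) (hψ₀ : ψ 0 = 0)
    (hdiff : ∀ s : ℝ, s ≠ 0 → DifferentiableAt ℝ ψ s)
    (hbound : ∀ s : ℝ, s ≠ 0 →
      c₁ * |s| ^ (p - 2) ≤ deriv ψ s ∧ deriv ψ s ≤ c₂ * |s| ^ (p - 2))
    {t : ℝ} (ht : 0 ≤ t) :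
    c₁ / (p - 1) * t ^ (p - 1) ≤ ψ t ∧ ψ t ≤ c₂ / (p - 1) * t ^ (p - 1) := by
  have hψ' : ∀ x > 0, HasDerivAt ψ (deriv ψ x) x := fun x hx => (hdiff x hx.ne').hasDerivAt
  have hbound' : ∀ x > 0,
      c₁ * x ^ (p - 1 - 1) ≤ deriv ψ x ∧ deriv ψ x ≤ c₂ * x ^ (p - 1 - 1) := fun x hx => by
    rw [show p - 1 - 1 = p - 2 by ring]
    simpa only [abs_of_pos hx] using hbound x hx.ne'
  exact ⟨div_mul_rpow_le_of_le_deriv (by linarith) hcont.continuousOn hψ₀ hψ'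
      (fun x hx => (hbound' x hx).1) ht,
    le_div_mul_rpow_of_deriv_le (by linarith) hcont.continuousOn hψ₀ hψ'
      (fun x hx => (hbound' x hx).2) ht⟩

theorem primitive_rpow_bounds (hp : 1 < p) (hcont : Continuous ψ)
    (hodd : ∀ s, ψ (-s) = -ψ s) (hdiff : ∀ s : ℝ, s ≠ 0 → DifferentiableAt ℝ ψ s)
    (hbound : ∀ s : ℝ, s ≠ 0 →
      c₁ * |s| ^ (p - 2) ≤ deriv ψ s ∧ deriv ψ s ≤ c₂ * |s| ^ (p - 2))
    (hΨ : ∀ t, Ψ t = ∫ s in (0 : ℝ)..t, ψ s) (t : ℝ) :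
    c₁ / (p - 1) / p * |t| ^ p ≤ Ψ t ∧ Ψ t ≤ c₂ / (p - 1) / p * |t| ^ p := by
  have hψ₀ : ψ 0 = 0 := by
    have := hodd 0
    rw [neg_zero] at this
    linarith
  have hΨ' : ∀ x, HasDerivAt Ψ (ψ x) x := fun x => by
    rw [funext hΨ]
    exact (hcont.integral_hasStrictDerivAt 0 x).hasDerivAt
  have hΨcont : ContinuousOn Ψ (Ici 0) :=
    (continuous_iff_continuousAt.2 fun x => (hΨ' x).continuousAt).continuousOn
  have hΨ₀ : Ψ 0 = 0 := by simp [hΨ]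
  have hψbounds := fun x (hx : 0 < x) =>
    rpow_bounds_of_deriv_rpow_bounds hp hcont hψ₀ hdiff hbound hx.le
  have habs : Ψ t = Ψ |t| := by
    rcases abs_choice t with h | h <;> rw [h]
    rw [hΨ, hΨ, integral_zero_neg_eq_of_odd hodd]
  rw [habs]
  exact ⟨div_mul_rpow_le_of_le_deriv (by linarith) hΨcont hΨ₀ (fun x _ => hΨ' x)
      (fun x hx => (hψbounds x hx).1) (abs_nonneg t),
    le_div_mul_rpow_of_deriv_le (by linarith) hΨcont hΨ₀ (fun x _ => hΨ' x)
      (fun x hx => (hψbounds x hx).2) (abs_nonneg t)⟩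

end

theorem stmt8_general (p c₁ c₂ : ℝ) (hp1 : 1 < p) (hp2 : p < 2) (hc₁ : 0 < c₁) (hc₁₂ : c₁ ≤ c₂)
    (ψ : ℝ → ℝ) (hcont : Continuous ψ)
    (hodd : ∀ s, ψ (-s) = -ψ s)
    (hdiff : ∀ s : ℝ, s ≠ 0 → DifferentiableAt ℝ ψ s)
    (hbound : ∀ s : ℝ, s ≠ 0 →
      c₁ * |s| ^ (p - 2) ≤ deriv ψ s ∧ deriv ψ s ≤ c₂ * |s| ^ (p - 2))
    (Ψ : ℝ → ℝ) (hΨ : ∀ t, Ψ t = ∫ s in (0:ℝ)..t, ψ s) :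
    ∃ c : ℝ, 0 < c ∧ ∀ a b : ℝ, ¬(a = 0 ∧ b = 0) →
      c * Ψ (a - b) ^ (2 / p) / (Ψ a + Ψ b) ^ ((2 - p) / p) ≤ (ψ a - ψ b) * (a - b) := by
  set C₁ := c₁ / (p - 1) / p
  set C₂ := c₂ / (p - 1) / p
  have hp : 0 < p - 1 := by linarith
  have hC₁ : 0 < C₁ := by positivity
  have hC₂ : 0 < C₂ := by have := hc₁.trans_le hc₁₂; positivity
  have hΨbounds := primitive_rpow_bounds hp1 hcont hodd hdiff hbound hΨ
  refine ⟨c₁ * (C₁ ^ ((2 - p) / p) / C₂ ^ (2 / p)), by positivity, fun a b hab => ?_⟩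
  set M := max |a| |b|
  have hM : 0 < M := by
    by_contra! h
    exact hab ⟨abs_nonpos_iff.1 ((le_max_left _ _).trans h),
      abs_nonpos_iff.1 ((le_max_right _ _).trans h)⟩
  have hΨnonneg : ∀ t, 0 ≤ Ψ t := fun t => le_trans (by positivity) (hΨbounds t).1
  have hY : C₁ * M ^ p ≤ Ψ a + Ψ b := by
    rcases max_choice |a| |b| with h | h <;> rw [show M = _ from h]
    · linarith [(hΨbounds a).1, hΨnonneg b]
    · linarith [(hΨbounds b).1, hΨnonneg a]
  calc c₁ * (C₁ ^ ((2 - p) / p) / C₂ ^ (2 / p)) * Ψ (a - b) ^ (2 / p) / (Ψ a + Ψ b) ^ ((2 - p) / p)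
      = c₁ * (C₁ ^ ((2 - p) / p) / C₂ ^ (2 / p) * Ψ (a - b) ^ (2 / p)
          / (Ψ a + Ψ b) ^ ((2 - p) / p)) := by ring
    _ ≤ c₁ * (M ^ (p - 2) * (a - b) ^ 2) := by
        gcongr
        exact rpow_div_rpow_le_rpow_mul_sq (by linarith) hp2.le hC₁ hC₂ hM (hΨnonneg _)
          (hΨbounds _).2 hY
    _ = c₁ * M ^ (p - 2) * (a - b) ^ 2 := by ring
    _ ≤ (ψ a - ψ b) * (a - b) :=
        mul_rpow_mul_sq_le_sub_mul_sub hp2.le hc₁.le hcont hdiff (fun s hs => (hbound s hs).1)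
          (le_max_left _ _) (le_max_right _ _)

theorem stmt8 (p c₁ c₂ : ℝ) (hp1 : 1 < p) (hp2 : p < 2) (hc₁ : 0 < c₁) (hc₁₂ : c₁ ≤ c₂)
    (ψ : ℝ → ℝ) (hcont : Continuous ψ) (hmono : Monotone ψ)
    (hodd : ∀ s, ψ (-s) = -ψ s)
    (hdiff : ∀ s : ℝ, s ≠ 0 → DifferentiableAt ℝ ψ s)
    (hbound : ∀ s : ℝ, s ≠ 0 →
      c₁ * |s| ^ (p - 2) ≤ deriv ψ s ∧ deriv ψ s ≤ c₂ * |s| ^ (p - 2))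
    (Ψ : ℝ → ℝ) (hΨ : ∀ t, Ψ t = ∫ s in (0:ℝ)..t, ψ s) :
    ∃ c : ℝ, 0 < c ∧ ∀ a b : ℝ, ¬(a = 0 ∧ b = 0) →
      c * Ψ (a - b) ^ (2 / p) / (Ψ a + Ψ b) ^ ((2 - p) / p) ≤ (ψ a - ψ b) * (a - b) :=
  stmt8_general p c₁ c₂ hp1 hp2 hc₁ hc₁₂ ψ hcont hodd hdiff hbound Ψ hΨ
end
end
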